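/- arXiv:1109.1658 — 2 statements merged into one kernel-verified Lean document; each statement's English description precedes it below -/
import Mathlib

section
/- The set ⊻_α L_α = {R ⊆ ∏_α Σ_α | for all p and all β, the section R_β[p] = {q ∈ Σ_β | p[q,β] ∈ R} belongs to L_β} is the top element of the set of weak tensor products of the L_α; i.e., it is a weak tensor product and contains every weak tensor product. -/
open Set

/-- A simple closure space on `σ`: a family of subsets closed under arbitrary
intersections (the empty intersection giving `univ`), containing `∅` and all singletons. -/
def IsSCS {σ : Type*} (L : Set (Set σ)) : Prop :=
  (∀ ω ⊆ L, ⋂₀ ω ∈ L) ∧ (∅ : Set σ) ∈ L ∧ ∀ p : σ, {p} ∈ L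

/-- The join of a subset `A` of atoms/points in a simple closure space `L`. -/
def sJoin {σ : Type*} (L : Set (Set σ)) (A : Set σ) : Set σ := ⋂₀ {b ∈ L | A ⊆ b}

/-- `b` covers `a` in `L`. -/
def CoversIn {σ : Type*} (L : Set (Set σ)) (a b : Set σ) : Prop :=
  a ⊂ b ∧ ∀ c ∈ L, a ⊆ c → c ⊆ b → c = a ∨ c = b

/-- `x` is a coatom of `L`. -/
def IsCoatomOf {σ : Type*} (L : Set (Set σ)) (x : Set σ) : Prop :=
  x ∈ L ∧ x ≠ univ ∧ ∀ c ∈ L, x ⊆ c → c = x ∨ c = univ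

/-- `L` is coatomistic: every element is a meet of coatoms. -/
def Coatomistic {σ : Type*} (L : Set (Set σ)) : Prop :=
  ∀ a ∈ L, a = ⋂₀ {x | IsCoatomOf L x ∧ a ⊆ x}

/-- Covering property: for any atom `p` and `a ∈ L` with `p ∧ a = 0`,
`p ∨ a` covers `a`. -/
def HasCovProp {σ : Type*} (L : Set (Set σ)) : Prop :=
  ∀ p : σ, ∀ a ∈ L, p ∉ a → CoversIn L a (sJoin L (insert p a))

/-- Covering property of the dual lattice of `L`. -/
def HasDualCovProp {σ : Type*} (L : Set (Set σ)) : Prop :=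
  ∀ x, IsCoatomOf L x → ∀ a ∈ L, sJoin L (x ∪ a) = univ → CoversIn L (x ∩ a) a

/-- `f` is an orthocomplementation of `L`: an order-reversing involution with
`a ∨ f a = 1` for all `a ∈ L`. -/
def IsOrthoOn {σ : Type*} (L : Set (Set σ)) (f : Set σ → Set σ) : Prop :=
  (∀ a ∈ L, f a ∈ L) ∧ (∀ a ∈ L, f (f a) = a) ∧
  (∀ a ∈ L, ∀ b ∈ L, a ⊆ b → f b ⊆ f a) ∧
  (∀ a ∈ L, ∀ b ∈ L, a ∪ f a ⊆ b → b = univ)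

/-- The permutation `g` of the points induces an automorphism of `L`. -/
def IsAutoOn {σ : Type*} (L : Set (Set σ)) (g : Equiv.Perm σ) : Prop :=
  ∀ a, a ∈ L ↔ g '' a ∈ L

/-- `L` contains `MO₃`: three distinct atoms `p, q, r` such that `p ∨ q`
covers each of them. -/
def ContainsMO3 {σ : Type*} (L : Set (Set σ)) : Prop :=
  ∃ p q r : σ, p ≠ q ∧ p ≠ r ∧ q ≠ r ∧
    CoversIn L {p} (sJoin L {p, q}) ∧ CoversIn L {q} (sJoin L {p, q}) ∧
    CoversIn L {r} (sJoin L {p, q})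

/-- `L` contains `MO₄`: four distinct atoms `p, q, r, s` such that `p ∨ q`
covers each of them. -/
def ContainsMO4 {σ : Type*} (L : Set (Set σ)) : Prop :=
  ∃ p q r s : σ, p ≠ q ∧ p ≠ r ∧ p ≠ s ∧ q ≠ r ∧ q ≠ s ∧ r ≠ s ∧
    CoversIn L {p} (sJoin L {p, q}) ∧ CoversIn L {q} (sJoin L {p, q}) ∧
    CoversIn L {r} (sJoin L {p, q}) ∧ CoversIn L {s} (sJoin L {p, q})

/-- A connected covering of the point set of `L`. -/
def IsConnCover {σ : Type*} (L : Set (Set σ)) (𝒜 : Set (Set σ)) : Prop :=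
  ⋃₀ 𝒜 = Set.univ ∧
  (∀ A ∈ 𝒜, ∃ p q : σ, p ∈ A ∧ q ∈ A ∧ p ≠ q) ∧
  (∀ A ∈ 𝒜, ∀ p ∈ A, ∀ q ∈ A, p ≠ q → ∃ r, r ∈ sJoin L {p, q} ∧ r ≠ p ∧ r ≠ q) ∧
  (∀ p q : σ, ∃ n : ℕ, ∃ c : Fin (n + 1) → Set σ, (∀ i, c i ∈ 𝒜) ∧
    p ∈ c 0 ∧ q ∈ c (Fin.last n) ∧
    ∀ i : Fin n, ∃ x y : σ, x ≠ y ∧ (x ∈ c i.castSucc ∧ x ∈ c i.succ) ∧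
      (y ∈ c i.castSucc ∧ y ∈ c i.succ))

/-- `L` is weakly connected: `L ≠ 2` and there is a connected covering. -/
def WeaklyConnected {σ : Type*} (L : Set (Set σ)) : Prop :=
  (∃ p q : σ, p ≠ q) ∧ ∃ 𝒜, IsConnCover L 𝒜

/-- Restriction of `L` to the subset `e`, as a family of subsets of `↥e`. -/
def restrictCS {σ : Type*} (L : Set (Set σ)) (e : Set σ) : Set (Set e) :=
  {B | ∃ a ∈ L, a ⊆ e ∧ B = Subtype.val ⁻¹' a}

/-- Center of an orthocomplemented simple closure space: elements whose
orthocomplement is the set complement. -/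
def centerOf {σ : Type*} (L : Set (Set σ)) (f : Set σ → Set σ) : Set (Set σ) :=
  {a ∈ L | f a = aᶜ}

/-- Central cover of a point `p`. -/
def centralCover {σ : Type*} (L : Set (Set σ)) (f : Set σ → Set σ) (p : σ) : Set σ :=
  ⋂₀ {a ∈ centerOf L f | p ∈ a}

section Family

variable {Ω : Type*} {X : Ω → Type*}

/-- `⋃_α π_α⁻¹ (a α)`. -/
def cylUnion (a : ∀ α, Set (X α)) : Set (∀ α, X α) := {p | ∃ α, p α ∈ a α}

/-- `p[B, β]`: the point `p` with its `β`-th coordinate varying over `B`. -/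
def pSub (p : ∀ α, X α) (β : Ω) (B : Set (X β)) : Set (∀ α, X α) :=
  {q | q β ∈ B ∧ ∀ α, α ≠ β → q α = p α}

/-- The section `R_β[p]` of `R ⊆ ∏_α X α`. -/
def sect (R : Set (∀ α, X α)) (β : Ω) (p : ∀ α, X α) : Set (X β) :=
  {q | ∃ r ∈ R, r β = q ∧ ∀ α, α ≠ β → r α = p α}

/-- The box product `⊼_α L_α`: all nonempty intersections of the sets
`⋃_α π_α⁻¹ (a α)`. -/
def boxProd (L : ∀ α, Set (Set (X α))) : Set (Set (∀ α, X α)) :=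
  {A | ∃ ω ⊆ {B | ∃ a : ∀ α, Set (X α), (∀ α, a α ∈ L α) ∧ B = cylUnion a},
    ω.Nonempty ∧ A = ⋂₀ ω}

/-- The Fraser product `⊻_α L_α`: all `R` whose sections all lie in the factors. -/
def fraserProd (L : ∀ α, Set (Set (X α))) : Set (Set (∀ α, X α)) :=
  {R | ∀ β, ∀ p : ∀ α, X α, sect R β p ∈ L β}

/-- `M` is a weak tensor product of the family `L`: axioms P1–P3. -/
def IsWTP (L : ∀ α, Set (Set (X α))) (M : Set (Set (∀ α, X α))) : Prop :=
  IsSCS M ∧ (∀ a : ∀ α, Set (X α), (∀ α, a α ∈ L α) → cylUnion a ∈ M) ∧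
  (∀ p : ∀ α, X α, ∀ β, ∀ B : Set (X β), pSub p β B ∈ M → B ∈ L β)

/-- The closure operator `⋁_β R = ⋃_p p[⋁ R_β[p]]`. -/
def vJoin (L : ∀ α, Set (Set (X α))) (β : Ω) (R : Set (∀ α, X α)) : Set (∀ α, X α) :=
  ⋃ p : ∀ α, X α, pSub p β (sJoin (L β) (sect R β p))

/-- The orthocomplementation `#` induced on the box product by
orthocomplementations of the factors. -/
def sharp (f : ∀ α, Set (X α) → Set (X α)) (a : Set (∀ α, X α)) : Set (∀ α, X α) :=
  {p | ∀ q ∈ a, ∃ α, p α ∈ f α {q α}}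

end Family

section Binary

variable {X₁ X₂ : Type*}

/-- `a₁ × Σ₂ ∪ Σ₁ × a₂`. -/
def cylUnion₂ (a₁ : Set X₁) (a₂ : Set X₂) : Set (X₁ × X₂) := {p | p.1 ∈ a₁ ∨ p.2 ∈ a₂}

/-- Binary box product. -/
def boxProd₂ (L₁ : Set (Set X₁)) (L₂ : Set (Set X₂)) : Set (Set (X₁ × X₂)) :=
  {A | ∃ ω ⊆ {B | ∃ a₁ ∈ L₁, ∃ a₂ ∈ L₂, B = cylUnion₂ a₁ a₂}, ω.Nonempty ∧ A = ⋂₀ ω}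

/-- Binary Fraser product. -/
def fraserProd₂ (L₁ : Set (Set X₁)) (L₂ : Set (Set X₂)) : Set (Set (X₁ × X₂)) :=
  {R | (∀ p₁, {q | (p₁, q) ∈ R} ∈ L₂) ∧ (∀ p₂, {q | (q, p₂) ∈ R} ∈ L₁)}

/-- Binary weak tensor product: axioms P1–P3. -/
def IsWTP₂ (L₁ : Set (Set X₁)) (L₂ : Set (Set X₂)) (M : Set (Set (X₁ × X₂))) : Prop :=
  IsSCS M ∧ (∀ a₁ ∈ L₁, ∀ a₂ ∈ L₂, cylUnion₂ a₁ a₂ ∈ M) ∧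
  (∀ p₁ : X₁, ∀ A₂ : Set X₂, {p₁} ×ˢ A₂ ∈ M → A₂ ∈ L₂) ∧
  (∀ p₂ : X₂, ∀ A₁ : Set X₁, A₁ ×ˢ {p₂} ∈ M → A₁ ∈ L₁)

/-- The simple closure space `MO_Σ`, containing only `∅`, `Σ` and the singletons. -/
def MOspace (X : Type*) : Set (Set X) := {∅, univ} ∪ {A | ∃ p, A = {p}}

end Binary

/-! Sections commute with intersections, and the section of a cylinder `⋃_α π_α⁻¹ (a α)` is
`Σ_β` or `a β`, so `⊻_α L_α` satisfies P1–P3. Conversely, for `R` in a weak tensor product `M`,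
`p[R_β[p], β]` is `R` intersected with the line through `p` in direction `β`; that line is an
intersection of one-coordinate cylinders, which lie in `M` by P2, so P3 puts `R_β[p]` in `L_β`. -/

open Function

namespace IsSCS

variable {σ : Type*} {L : Set (Set σ)}

theorem univ_mem (hL : IsSCS L) : univ ∈ L := by
  simpa using hL.1 ∅ (empty_subset L)

theorem biInter_mem {ι : Type*} (hL : IsSCS L) {s : Set ι} {f : ι → Set σ}
    (hf : ∀ i ∈ s, f i ∈ L) : ⋂ i ∈ s, f i ∈ L := by
  rw [← sInter_image]
  exact hL.1 _ (forall_mem_image.2 hf)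

theorem inter_mem (hL : IsSCS L) {a b : Set σ} (ha : a ∈ L) (hb : b ∈ L) : a ∩ b ∈ L := by
  rw [← sInter_pair]
  exact hL.1 _ (pair_subset ha hb)

theorem subsingleton_mem (hL : IsSCS L) {s : Set σ} (hs : s.Subsingleton) : s ∈ L := by
  obtain rfl | ⟨x, rfl⟩ := hs.eq_empty_or_singleton
  exacts [hL.2.1, hL.2.2 x]

end IsSCS

section Sections

variable {Ω : Type*} {X : Ω → Type*}

theorem sect_eq_preimage_update [DecidableEq Ω] (R : Set (∀ α, X α)) (β : Ω)
    (p : ∀ α, X α) : sect R β p = update p β ⁻¹' R := by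
  ext q
  constructor
  · rintro ⟨r, hr, rfl, hoff⟩
    rwa [mem_preimage, update_eq_iff.2 ⟨rfl, fun α hα => (hoff α hα).symm⟩]
  · intro hq
    exact ⟨update p β q, hq, update_self .., fun α hα => update_of_ne hα ..⟩

theorem sect_pSub_self (p : ∀ α, X α) (β : Ω) (B : Set (X β)) :
    sect (pSub p β B) β p = B := by
  classical
  ext q
  simp only [sect_eq_preimage_update, pSub, mem_preimage, mem_ofPred_eq, update_self,
    and_iff_left_iff_imp]
  exact fun _ α hα => update_of_ne hα ..

theorem sect_cylUnion_eq_univ_or (a : ∀ α, Set (X α)) (β : Ω) (p : ∀ α, X α) :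
    sect (cylUnion a) β p = univ ∨ sect (cylUnion a) β p = a β := by
  classical
  by_cases h : ∃ α, α ≠ β ∧ p α ∈ a α
  · obtain ⟨α, hα, hpα⟩ := h
    left
    ext q
    simpa [sect_eq_preimage_update, cylUnion] using ⟨α, by rwa [update_of_ne hα]⟩
  · right
    push Not at h
    ext q
    simp only [sect_eq_preimage_update, cylUnion, mem_preimage, mem_ofPred_eq]
    constructor
    · rintro ⟨α, hα⟩
      obtain rfl | hαβ := eq_or_ne α β
      · simpa using hα
      · exact absurd (update_of_ne hαβ q p ▸ hα) (h α hαβ)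
    · exact fun hq => ⟨β, by simpa using hq⟩

theorem pSub_sect_eq_inter (R : Set (∀ α, X α)) (β : Ω) (p : ∀ α, X α) :
    pSub p β (sect R β p) = R ∩ pSub p β univ := by
  ext q
  constructor
  · rintro ⟨⟨r, hr, hrβ, hroff⟩, hoff⟩
    have hrq : r = q := funext fun α => by
      obtain rfl | hα := eq_or_ne α β
      exacts [hrβ, (hroff α hα).trans (hoff α hα).symm]
    exact ⟨hrq ▸ hr, trivial, hoff⟩
  · rintro ⟨hq, -, hoff⟩
    exact ⟨⟨q, hq, rfl, hoff⟩, hoff⟩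

theorem pSub_univ_eq_biInter (p : ∀ α, X α) (β : Ω) :
    pSub p β univ = ⋂ γ ∈ {γ | γ ≠ β}, eval γ ⁻¹' {p γ} := by
  ext q
  simp [pSub]

theorem cylUnion_update_empty [DecidableEq Ω] (γ : Ω) (s : Set (X γ)) :
    cylUnion (update (fun α => (∅ : Set (X α))) γ s) = eval γ ⁻¹' s := by
  ext q
  constructor
  · rintro ⟨α, hα⟩
    obtain rfl | hαγ := eq_or_ne α γ
    · simpa using hα
    · simp [update_of_ne hαγ] at hα
  · exact fun hq => ⟨γ, by simpa using hq⟩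

end Sections

section Fraser

variable {Ω : Type*} {X : Ω → Type*} {L : ∀ α, Set (Set (X α))}

theorem isSCS_fraserProd (hL : ∀ α, IsSCS (L α)) : IsSCS (fraserProd L) := by
  classical
  refine ⟨fun ω hω β p => ?_, fun β p => ?_, fun p₀ β p => ?_⟩
  · rw [sect_eq_preimage_update, preimage_sInter]
    exact (hL β).biInter_mem fun R hR => sect_eq_preimage_update R β p ▸ hω hR β p
  · rw [sect_eq_preimage_update, preimage_empty]
    exact (hL β).2.1
  · rw [sect_eq_preimage_update]
    exact (hL β).subsingleton_mem (subsingleton_singleton.preimage (update_injective p β))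

theorem isWTP_fraserProd (hL : ∀ α, IsSCS (L α)) : IsWTP L (fraserProd L) := by
  refine ⟨isSCS_fraserProd hL, fun a ha β p => ?_, fun p β B hB => ?_⟩
  · obtain h | h := sect_cylUnion_eq_univ_or a β p <;> rw [h]
    exacts [(hL β).univ_mem, ha β]
  · simpa only [sect_pSub_self] using hB β p

theorem IsWTP.preimage_eval_mem {M : Set (Set (∀ α, X α))} (hM : IsWTP L M)
    (hL : ∀ α, IsSCS (L α)) {γ : Ω} {s : Set (X γ)} (hs : s ∈ L γ) : eval γ ⁻¹' s ∈ M := by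
  classical
  rw [← cylUnion_update_empty]
  refine hM.2.1 _ fun α => ?_
  obtain rfl | hαγ := eq_or_ne α γ
  · simpa using hs
  · simpa [update_of_ne hαγ] using (hL α).2.1

theorem IsWTP.subset_fraserProd {M : Set (Set (∀ α, X α))} (hM : IsWTP L M)
    (hL : ∀ α, IsSCS (L α)) : M ⊆ fraserProd L := by
  intro R hR β p
  apply hM.2.2 p β
  have hline : pSub p β univ ∈ M := by
    rw [pSub_univ_eq_biInter]
    exact hM.1.biInter_mem fun γ _ => hM.preimage_eval_mem hL ((hL γ).2.2 (p γ))
  rw [pSub_sect_eq_inter]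
  exact hM.1.inter_mem hR hline

end Fraser

theorem stmt_5_general {Ω : Type*} {X : Ω → Type*}
    (L : ∀ α, Set (Set (X α))) (hL : ∀ α, IsSCS (L α)) :
    IsWTP L (fraserProd L) ∧ ∀ M, IsWTP L M → M ⊆ fraserProd L :=
  ⟨isWTP_fraserProd hL, fun _ hM => hM.subset_fraserProd hL⟩

/-- the Fraser product `⊻_α L_α` is the top element of the set of weak
tensor products: it is a weak tensor product and contains every weak tensor product. -/
theorem stmt_5 {Ω : Type*} [Nonempty Ω] {X : Ω → Type*} [∀ α, Nonempty (X α)]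
    (L : ∀ α, Set (Set (X α))) (hL : ∀ α, IsSCS (L α)) :
    IsWTP L (fraserProd L) ∧ ∀ M, IsWTP L M → M ⊆ fraserProd L :=
  stmt_5_general L hL
end

section
/- If two simple closure spaces L₁ and L₂ each contain MO₃ (i.e., there exist in each L_i three atoms p_i, q_i, r_i such that p_i ∨ q_i covers p_i, q_i and r_i), then the box product L₁ ⊼ L₂ is strictly smaller than the Fraser product L₁ ⊻ L₂. -/
open Set

/-!
Every member of the box product is an intersection of cylinders `a₁ × Σ₂ ∪ Σ₁ × a₂`, whose
sections are `Σ_i` or `a_i`; hence box ⊆ Fraser. For strictness take the "diagonal"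
`R = {(p₁, p₂), (q₁, q₂), (r₁, r₂)}` built from the two copies of `MO₃`: all its sections are
empty or singletons, so `R` lies in the Fraser product. But a cylinder containing `R` must contain
`(p₁, r₂)`: otherwise `p₂ ∈ a₂` and `r₁ ∈ a₁`, and `(q₁, q₂)` forces either `q₁ ∈ a₁`, whence
`p₁ ∈ q₁ ∨ r₁ ⊆ a₁` by the exchange property of `MO₃`, or `q₂ ∈ a₂`, whence `r₂ ∈ p₂ ∨ q₂ ⊆ a₂`.
-/

section ClosureSpace

variable {σ : Type*} {L : Set (Set σ)}

lemma sJoin_mem (hL : ∀ ω ⊆ L, ⋂₀ ω ∈ L) (A : Set σ) : sJoin L A ∈ L :=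
  hL _ fun _ hb => hb.1

lemma subset_sJoin (L : Set (Set σ)) (A : Set σ) : A ⊆ sJoin L A :=
  fun _ hx => mem_sInter.2 fun _ hb => hb.2 hx

lemma sJoin_subset {A b : Set σ} (hb : b ∈ L) (hA : A ⊆ b) : sJoin L A ⊆ b :=
  sInter_subset_of_mem ⟨hb, hA⟩

lemma univ_mem_of_sInter_mem (hL : ∀ ω ⊆ L, ⋂₀ ω ∈ L) : (univ : Set σ) ∈ L := by
  simpa using hL ∅ (empty_subset _)

lemma preimage_sInter_mem {α : Type*} (hL : ∀ ω ⊆ L, ⋂₀ ω ∈ L) (f : σ → α)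
    {ω : Set (Set α)} (h : ∀ B ∈ ω, f ⁻¹' B ∈ L) : f ⁻¹' ⋂₀ ω ∈ L := by
  rw [preimage_sInter, ← sInter_image]
  exact hL _ (by rintro _ ⟨B, hB, rfl⟩; exact h B hB)

lemma mem_of_subsingleton (h₀ : ∅ ∈ L) (h₁ : ∀ p, {p} ∈ L) {s : Set σ}
    (hs : s.Subsingleton) : s ∈ L := by
  rcases hs.eq_empty_or_singleton with rfl | ⟨p, rfl⟩
  exacts [h₀, h₁ p]

/-- Exchange: `q ∨ r` lies between `{q}` and `p ∨ q` and differs from `{q}`, so the covering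
forces `q ∨ r = p ∨ q`. -/
lemma mem_sJoin_of_coversIn_singleton (hL : ∀ ω ⊆ L, ⋂₀ ω ∈ L) {p q r : σ}
    (hq : CoversIn L {q} (sJoin L {p, q})) (hr : r ∈ sJoin L {p, q}) (hqr : q ≠ r) :
    p ∈ sJoin L {q, r} := by
  have hq_mem : q ∈ sJoin L {q, r} := subset_sJoin L _ (mem_insert q _)
  have hr_mem : r ∈ sJoin L {q, r} := subset_sJoin L _ (mem_insert_of_mem q rfl)
  have hle : sJoin L {q, r} ⊆ sJoin L {p, q} :=
    sJoin_subset (sJoin_mem hL _) (pair_subset (subset_sJoin L _ (mem_insert_of_mem p rfl)) hr)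
  rcases hq.2 _ (sJoin_mem hL _) (singleton_subset_iff.2 hq_mem) hle with hbot | htop
  · exact absurd (hbot ▸ hr_mem : r ∈ ({q} : Set σ)) (Ne.symm hqr)
  · exact htop ▸ subset_sJoin L _ (mem_insert p _)

end ClosureSpace

section Products

variable {X₁ X₂ : Type*} {L₁ : Set (Set X₁)} {L₂ : Set (Set X₂)}

lemma preimage_mk_cylUnion₂_mem (hL₂ : ∀ ω ⊆ L₂, ⋂₀ ω ∈ L₂) {a₁ : Set X₁} {a₂ : Set X₂}
    (ha₂ : a₂ ∈ L₂) (x : X₁) : Prod.mk x ⁻¹' cylUnion₂ a₁ a₂ ∈ L₂ := by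
  by_cases hx : x ∈ a₁
  · simpa [cylUnion₂, hx] using univ_mem_of_sInter_mem hL₂
  · simpa [cylUnion₂, hx] using ha₂

lemma preimage_mk_left_cylUnion₂_mem (hL₁ : ∀ ω ⊆ L₁, ⋂₀ ω ∈ L₁) {a₁ : Set X₁} {a₂ : Set X₂}
    (ha₁ : a₁ ∈ L₁) (y : X₂) : (fun x => (x, y)) ⁻¹' cylUnion₂ a₁ a₂ ∈ L₁ := by
  by_cases hy : y ∈ a₂
  · simpa [cylUnion₂, hy] using univ_mem_of_sInter_mem hL₁
  · simpa [cylUnion₂, hy] using ha₁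

lemma boxProd₂_subset_fraserProd₂ (hL₁ : ∀ ω ⊆ L₁, ⋂₀ ω ∈ L₁) (hL₂ : ∀ ω ⊆ L₂, ⋂₀ ω ∈ L₂) :
    boxProd₂ L₁ L₂ ⊆ fraserProd₂ L₁ L₂ := by
  rintro _ ⟨ω, hω, -, rfl⟩
  refine ⟨fun x => preimage_sInter_mem hL₂ _ fun B hB => ?_,
    fun y => preimage_sInter_mem hL₁ _ fun B hB => ?_⟩
  · obtain ⟨a₁, -, a₂, ha₂, rfl⟩ := hω hB
    exact preimage_mk_cylUnion₂_mem hL₂ ha₂ x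
  · obtain ⟨a₁, ha₁, a₂, -, rfl⟩ := hω hB
    exact preimage_mk_left_cylUnion₂_mem hL₁ ha₁ y

lemma mem_fraserProd₂_of_injOn (hL₁ : ∅ ∈ L₁) (hL₁' : ∀ p, {p} ∈ L₁)
    (hL₂ : ∅ ∈ L₂) (hL₂' : ∀ p, {p} ∈ L₂) {R : Set (X₁ × X₂)}
    (h₁ : InjOn Prod.fst R) (h₂ : InjOn Prod.snd R) : R ∈ fraserProd₂ L₁ L₂ :=
  ⟨fun _ => mem_of_subsingleton hL₂ hL₂' fun _ hy _ hy' => congrArg Prod.snd (h₁ hy hy' rfl),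
    fun _ => mem_of_subsingleton hL₁ hL₁' fun _ hx _ hx' => congrArg Prod.fst (h₂ hx hx' rfl)⟩

lemma mem_cylUnion₂_of_mem_sJoin {a₁ : Set X₁} {a₂ : Set X₂} (ha₁ : a₁ ∈ L₁) (ha₂ : a₂ ∈ L₂)
    {p₁ q₁ r₁ : X₁} {p₂ q₂ r₂ : X₂}
    (hp₁ : p₁ ∈ sJoin L₁ {q₁, r₁}) (hr₂ : r₂ ∈ sJoin L₂ {p₂, q₂})
    (hp : (p₁, p₂) ∈ cylUnion₂ a₁ a₂) (hq : (q₁, q₂) ∈ cylUnion₂ a₁ a₂)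
    (hr : (r₁, r₂) ∈ cylUnion₂ a₁ a₂) : (p₁, r₂) ∈ cylUnion₂ a₁ a₂ := by
  by_contra! h
  simp only [cylUnion₂, mem_ofPred_eq, not_or] at h hp hq hr
  have hp₂ : p₂ ∈ a₂ := hp.resolve_left h.1
  have hr₁ : r₁ ∈ a₁ := hr.resolve_right h.2
  rcases hq with hq₁ | hq₂
  · exact h.1 (sJoin_subset ha₁ (pair_subset hq₁ hr₁) hp₁)
  · exact h.2 (sJoin_subset ha₂ (pair_subset hp₂ hq₂) hr₂)

lemma mem_of_mem_boxProd₂ {A : Set (X₁ × X₂)} (hA : A ∈ boxProd₂ L₁ L₂)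
    {p₁ q₁ r₁ : X₁} {p₂ q₂ r₂ : X₂}
    (hp₁ : p₁ ∈ sJoin L₁ {q₁, r₁}) (hr₂ : r₂ ∈ sJoin L₂ {p₂, q₂})
    (hp : (p₁, p₂) ∈ A) (hq : (q₁, q₂) ∈ A) (hr : (r₁, r₂) ∈ A) : (p₁, r₂) ∈ A := by
  obtain ⟨ω, hω, -, rfl⟩ := hA
  intro B hB
  obtain ⟨a₁, ha₁, a₂, ha₂, rfl⟩ := hω hB
  exact mem_cylUnion₂_of_mem_sJoin ha₁ ha₂ hp₁ hr₂ (hp _ hB) (hq _ hB) (hr _ hB)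

end Products

/-- if `L₁` and `L₂` both contain `MO₃`, then the box product is strictly
smaller than the Fraser product. -/
theorem stmt_9 {X₁ X₂ : Type*} (L₁ : Set (Set X₁)) (L₂ : Set (Set X₂))
    (h₁ : IsSCS L₁) (h₂ : IsSCS L₂) (m₁ : ContainsMO3 L₁) (m₂ : ContainsMO3 L₂) :
    boxProd₂ L₁ L₂ ⊂ fraserProd₂ L₁ L₂ := by
  obtain ⟨p₁, q₁, r₁, hpq₁, hpr₁, hqr₁, -, hq₁, hr₁⟩ := m₁
  obtain ⟨p₂, q₂, r₂, hpq₂, hpr₂, hqr₂, -, -, hr₂⟩ := m₂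
  set R : Set (X₁ × X₂) := {(p₁, p₂), (q₁, q₂), (r₁, r₂)}
  have hinj₁ : InjOn Prod.fst R := by
    rintro _ (rfl | rfl | rfl) _ (rfl | rfl | rfl) h <;> simp_all
  have hinj₂ : InjOn Prod.snd R := by
    rintro _ (rfl | rfl | rfl) _ (rfl | rfl | rfl) h <;> simp_all
  refine (ssubset_iff_of_subset (boxProd₂_subset_fraserProd₂ h₁.1 h₂.1)).2
    ⟨R, mem_fraserProd₂_of_injOn h₁.2.1 h₁.2.2 h₂.2.1 h₂.2.2 hinj₁ hinj₂, fun hR => ?_⟩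
  have hp₁ : p₁ ∈ sJoin L₁ {q₁, r₁} :=
    mem_sJoin_of_coversIn_singleton h₁.1 hq₁ (hr₁.1.subset rfl) hqr₁
  have hpr := mem_of_mem_boxProd₂ hR hp₁ (hr₂.1.subset rfl) (by simp [R]) (by simp [R]) (by simp [R])
  simp [R, hpq₁, hpr₁, hpr₂.symm] at hpr
end
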